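/- arXiv:1810.10621 — 8 statements merged into one kernel-verified Lean document; each statement's English description precedes it below -/
import Mathlib

section
/- Let p ≥ 1, m ≥ 1 be integers, n = m + p, λ_0, …, λ_p positive reals and μ_0, …, μ_{p−1} nonnegative reals. Let A be the (p+1)×(p+1) real matrix with rows and columns indexed by 0, …, p whose entries are: A(0,0) = n·λ_0; A(0,j) = −j·μ_{j−1} for 1 ≤ j ≤ p; A(j,j) = λ_j·(n − j) + j·μ_{j−1} for 1 ≤ j ≤ p; A(j, j−1) = −λ_{j−1}·(n − j + 1) for 1 ≤ j ≤ p; and all other entries zero. Then the vector v ∈ ℝ^{p+1} defined by v_x = ((p·μ_{p−1} + λ_p·m)/φ_p)·∏_{j=0, j≠x}^{p−1} Λ_x(j) for 0 ≤ x ≤ p−1 and v_p = (∏_{i=0}^{p−1} λ_i·(m+1+i))/φ_p satisfies A·v = e_0, where e_0 is the standard basis vector with 1 in position 0 and 0 elsewhere. (This is the steady-state linear system A(0)·P = N^{(0)} of the generalized Markov failure model with error rates γ_i = 0, and v gives the Laplace transforms L_{P_{m+p−x}}(0) and L_{P_m}(0) of Theorem 3.1.) -/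
/-!
Write `G x = ∏_{j<p} Λ_x(j)` and `c = Λ_p(p) / φ_p = (p μ_{p-1} + λ_p m) / φ_p`. The
functions `Λ_x` and `Λ_{x+1}` differ only at `j = x`, hence `Λ_x(x) v_x = c G x` for `x ≤ p`
and `Λ_{x+1}(x) v_x = c G (x+1)` for `x < p`. So row `x + 1` of `A v` is
`Λ_{x+1}(x+1) v_{x+1} - Λ_{x+1}(x) v_x = 0`, while in row `0` the repair terms
`x μ_{x-1} v_x = (Λ_x(x) - Λ_{x+1}(x)) v_x` telescope, leaving `λ_p m G p / φ_p`. Finally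
`φ_p = λ_p m G p` because `∏_{j<p} (n - j) = ∏_{i<p} (m + 1 + i)`.
-/

open Finset

theorem Finset.mul_prod_erase_of_forall_ne {ι M : Type*} [DecidableEq ι] [CommMonoid M]
    {s : Finset ι} {f g : ι → M} {a : ι} (ha : a ∈ s)
    (hfg : ∀ j ∈ s, j ≠ a → f j = g j) :
    g a * ∏ j ∈ s.erase a, f j = ∏ j ∈ s, g j := by
  rw [← mul_prod_erase s g ha,
    prod_congr rfl fun j hj => hfg j (mem_of_mem_erase hj) (ne_of_mem_erase hj)]

theorem Finset.prod_range_succ_mul_natCast_add {R : Type*} [CommSemiring R] (f : ℕ → R)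
    (m p : ℕ) :
    ∏ i ∈ range (p + 1), f i * ((m : R) + i)
      = f p * m * ∏ i ∈ range p, f i * ((m : R) + 1 + i) := by
  simp only [prod_mul_distrib, prod_range_succ f, prod_range_succ' (fun i => (m : R) + i),
    Nat.cast_add, Nat.cast_one, Nat.cast_zero, add_zero, ← add_assoc, add_right_comm (m : R) 1]
  ring

theorem Finset.prod_range_natCast_add_sub {R : Type*} [CommRing R] (m p : ℕ) :
    ∏ j ∈ range p, (((m + p : ℕ) : R) - j) = ∏ i ∈ range p, ((m : R) + 1 + i) := by
  calc ∏ j ∈ range p, (((m + p : ℕ) : R) - j) = ((m + p).descFactorial p : R) := by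
        rw [Nat.descFactorial_eq_prod_range, Nat.cast_prod]
        exact prod_congr rfl fun j hj => by rw [Nat.cast_sub (by simp at hj; omega)]
    _ = ∏ i ∈ range p, ((m : R) + 1 + i) := by
        rw [Nat.add_descFactorial_eq_ascFactorial, Nat.ascFactorial_eq_prod_range]
        push_cast
        rfl

namespace MTTDL

def exitRate (lam mu : ℕ → ℝ) (n x j : ℕ) : ℝ :=
  lam j * ((n : ℝ) - j) + if x ≤ j then (j : ℝ) * mu (j - 1) else 0

def exitRateProd (lam mu : ℕ → ℝ) (n p x : ℕ) : ℝ :=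
  ∏ j ∈ range p, exitRate lam mu n x j

/-- The vector `v`, with `v_p` written as `G p / φ` and `p μ_{p-1} + λ_p m` as `Λ_p(p)`. -/
noncomputable def solution (lam mu : ℕ → ℝ) (n p : ℕ) (phi : ℝ) (x : ℕ) : ℝ :=
  if x = p then exitRateProd lam mu n p p / phi
  else exitRate lam mu n p p / phi * ∏ j ∈ (range p).erase x, exitRate lam mu n x j

variable {lam mu : ℕ → ℝ} {n p x j : ℕ} {phi : ℝ}

local notation "Λ" => exitRate lam mu n
local notation "𝒢" => exitRateProd lam mu n p

theorem exitRate_succ_of_ne (h : j ≠ x) : Λ (x + 1) j = Λ x j := by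
  have : x + 1 ≤ j ↔ x ≤ j := by omega
  simp only [exitRate, this]

theorem exitRate_self : Λ x x = lam x * (n - x) + x * mu (x - 1) := by
  simp [exitRate]

theorem exitRate_of_lt (h : j < x) : Λ x j = lam j * (n - j) := by
  simp [exitRate, not_le.2 h]

theorem exitRate_self_mul_prod_erase (hx : x < p) :
    Λ x x * ∏ j ∈ (range p).erase x, Λ x j = 𝒢 x :=
  mul_prod_erase _ _ (mem_range.2 hx)

theorem exitRate_succ_mul_prod_erase (hx : x < p) :
    Λ (x + 1) x * ∏ j ∈ (range p).erase x, Λ x j = 𝒢 (x + 1) :=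
  mul_prod_erase_of_forall_ne (mem_range.2 hx) fun _ _ hj => (exitRate_succ_of_ne hj).symm

theorem exitRate_self_mul_solution (hx : x ≤ p) :
    Λ x x * solution lam mu n p phi x = Λ p p / phi * 𝒢 x := by
  rcases hx.eq_or_lt with rfl | hx
  · rw [solution, if_pos rfl]
    ring
  · rw [solution, if_neg hx.ne, mul_left_comm, exitRate_self_mul_prod_erase hx]

theorem exitRate_succ_mul_solution (hx : x < p) :
    Λ (x + 1) x * solution lam mu n p phi x = Λ p p / phi * 𝒢 (x + 1) := by
  rw [solution, if_neg hx.ne, mul_left_comm, exitRate_succ_mul_prod_erase hx]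

theorem repair_mul_solution (hx : x < p) :
    x * mu (x - 1) * solution lam mu n p phi x = Λ p p / phi * (𝒢 x - 𝒢 (x + 1)) := by
  rw [mul_sub, ← exitRate_self_mul_solution hx.le, ← exitRate_succ_mul_solution hx, ← sub_mul,
    exitRate_self, exitRate_of_lt (Nat.lt_succ_self x)]
  ring

theorem rowZero_dotProduct_solution :
    (Pi.single 0 (Λ 0 0) - fun j : Fin (p + 1) => (j.val : ℝ) * mu (j.val - 1))
        ⬝ᵥ (fun x : Fin (p + 1) => solution lam mu n p phi x)
      = lam p * (n - p) * 𝒢 p / phi := by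
  rw [sub_dotProduct, single_dotProduct, dotProduct,
    Fin.sum_univ_eq_sum_range (fun x => x * mu (x - 1) * solution lam mu n p phi x),
    sum_range_succ, sum_congr rfl fun x hx => repair_mul_solution (mem_range.1 hx), ← mul_sum,
    sum_range_sub', Fin.val_zero, exitRate_self_mul_solution (Nat.zero_le p), solution, if_pos rfl,
    exitRate_self]
  ring

theorem rowSucc_dotProduct_solution (k : Fin p) :
    (Pi.single k.castSucc (-Λ (k + 1) k) + Pi.single k.succ (Λ (k + 1) (k + 1)))
        ⬝ᵥ (fun x : Fin (p + 1) => solution lam mu n p phi x) = 0 := by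
  rw [add_dotProduct, single_dotProduct, single_dotProduct, Fin.val_castSucc, Fin.val_succ,
    neg_mul, exitRate_succ_mul_solution k.isLt, exitRate_self_mul_solution k.isLt, neg_add_cancel]

theorem exitRate_add_self (m : ℕ) : exitRate lam mu (m + p) p p = p * mu (p - 1) + lam p * m := by
  rw [exitRate_self]
  push_cast
  ring

theorem exitRateProd_add_self (m : ℕ) :
    exitRateProd lam mu (m + p) p p = ∏ i ∈ range p, lam i * ((m : ℝ) + 1 + i) := by
  rw [exitRateProd, prod_congr rfl fun j hj => exitRate_of_lt (mem_range.1 hj),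
    prod_mul_distrib, prod_mul_distrib, prod_range_natCast_add_sub]

end MTTDL

open MTTDL

theorem mttdl_linear_system_solution_general
    (p m : ℕ) (hm : 1 ≤ m)
    (lam : ℕ → ℝ) (mu : ℕ → ℝ)
    (hlam : ∀ i ≤ p, 0 < lam i)
    (n : ℕ) (hn : n = m + p)
    (Lam : ℕ → ℕ → ℝ)
    (hLam : ∀ x j, Lam x j
      = lam j * ((n : ℝ) - j) + (if x ≤ j then (j : ℝ) * mu (j - 1) else 0))
    (phi : ℝ) (hphi : phi = ∏ i ∈ Finset.range (p + 1), lam i * ((m : ℝ) + i))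
    (A : Matrix (Fin (p + 1)) (Fin (p + 1)) ℝ)
    (hA : ∀ i j : Fin (p + 1), A i j =
      if i.val = 0 ∧ j.val = 0 then (n : ℝ) * lam 0
      else if i.val = 0 then -((j.val : ℝ) * mu (j.val - 1))
      else if j.val = i.val then lam i.val * ((n : ℝ) - i.val) + (i.val : ℝ) * mu (i.val - 1)
      else if j.val + 1 = i.val then -(lam (i.val - 1) * ((n : ℝ) - i.val + 1))
      else 0)
    (v : Fin (p + 1) → ℝ)
    (hv : ∀ x : Fin (p + 1), v x =
      if x.val = p then (∏ i ∈ Finset.range p, lam i * ((m : ℝ) + 1 + i)) / phi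
      else (((p : ℝ) * mu (p - 1) + lam p * m) / phi) *
        ∏ j ∈ (Finset.range p).erase x.val, Lam x.val j) :
    A.mulVec v = Pi.single 0 1 := by
  subst hn
  obtain rfl : Lam = exitRate lam mu (m + p) := funext₂ hLam
  have hphi_eq : phi = lam p * ((m + p : ℕ) - p) * exitRateProd lam mu (m + p) p p := by
    rw [hphi, prod_range_succ_mul_natCast_add, exitRateProd_add_self]
    push_cast
    ring
  have hphi_ne : phi ≠ 0 := by
    rw [hphi]
    exact prod_ne_zero_iff.2 fun i hi =>
      (mul_pos (hlam i (Nat.lt_succ_iff.1 (mem_range.1 hi))) (by positivity)).ne'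
  obtain rfl : v = fun x : Fin (p + 1) => solution lam mu (m + p) p phi x := by
    ext x
    rw [hv, solution, exitRateProd_add_self, exitRate_add_self]
  ext i
  refine Fin.cases ?_ (fun k => ?_) i
  · have hrow : A 0
        = Pi.single 0 (exitRate lam mu (m + p) 0 0) - fun j => (j.val : ℝ) * mu (j.val - 1) := by
      ext j
      rcases Fin.eq_zero_or_eq_succ j with rfl | ⟨j, rfl⟩ <;> simp [hA, exitRate, mul_comm]
    rw [Matrix.mulVec, hrow, rowZero_dotProduct_solution, ← hphi_eq, div_self hphi_ne,
      Pi.single_eq_same]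
  · have hrow : A k.succ = Pi.single k.castSucc (-exitRate lam mu (m + p) (k + 1) k)
        + Pi.single k.succ (exitRate lam mu (m + p) (k + 1) (k + 1)) := by
      ext j
      rw [hA, if_neg (by simp), if_neg (by simp), Pi.add_apply, Pi.single_apply, Pi.single_apply]
      simp only [Fin.ext_iff, Fin.val_succ, Fin.val_castSucc]
      split_ifs <;> first | omega | simp_all [exitRate_self, exitRate_of_lt, sub_add]
    rw [Matrix.mulVec, hrow, rowSucc_dotProduct_solution, Pi.single_eq_of_ne (Fin.succ_ne_zero k)]

/-- The steady-state linear system `A(0) ⬝ P = N⁽⁰⁾` of the generalized Markov failure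
model with error rates `γᵢ = 0`: the vector of Laplace transforms from Theorem 3.1
solves the system. -/
theorem mttdl_linear_system_solution
    (p m : ℕ) (hp : 1 ≤ p) (hm : 1 ≤ m)
    (lam : ℕ → ℝ) (mu : ℕ → ℝ)
    (hlam : ∀ i ≤ p, 0 < lam i) (hmu : ∀ i ≤ p - 1, 0 ≤ mu i)
    (n : ℕ) (hn : n = m + p)
    (Lam : ℕ → ℕ → ℝ)
    (hLam : ∀ x j, Lam x j
      = lam j * ((n : ℝ) - j) + (if x ≤ j then (j : ℝ) * mu (j - 1) else 0))
    (phi : ℝ) (hphi : phi = ∏ i ∈ Finset.range (p + 1), lam i * ((m : ℝ) + i))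
    (A : Matrix (Fin (p + 1)) (Fin (p + 1)) ℝ)
    (hA : ∀ i j : Fin (p + 1), A i j =
      if i.val = 0 ∧ j.val = 0 then (n : ℝ) * lam 0
      else if i.val = 0 then -((j.val : ℝ) * mu (j.val - 1))
      else if j.val = i.val then lam i.val * ((n : ℝ) - i.val) + (i.val : ℝ) * mu (i.val - 1)
      else if j.val + 1 = i.val then -(lam (i.val - 1) * ((n : ℝ) - i.val + 1))
      else 0)
    (v : Fin (p + 1) → ℝ)
    (hv : ∀ x : Fin (p + 1), v x =
      if x.val = p then (∏ i ∈ Finset.range p, lam i * ((m : ℝ) + 1 + i)) / phi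
      else (((p : ℝ) * mu (p - 1) + lam p * m) / phi) *
        ∏ j ∈ (Finset.range p).erase x.val, Lam x.val j) :
    A.mulVec v = Pi.single 0 1 :=
  mttdl_linear_system_solution_general p m hm lam mu hlam n hn Lam hLam phi hphi A hA v hv
end

section
/- Let p ≥ 1, m ≥ 1 be integers, n = m + p, λ_0, …, λ_p positive reals and μ_0, …, μ_{p−1} nonnegative reals. Define v_x = ((p·μ_{p−1} + λ_p·m)/φ_p)·∏_{j=0, j≠x}^{p−1} Λ_x(j) for 0 ≤ x ≤ p−1 and v_p = (∏_{i=0}^{p−1} λ_i·(m+1+i))/φ_p. Then v_p = 1/(λ_p·m), and consequently the sum Σ_{x=0}^{p} v_x equals ((p·μ_{p−1} + λ_p·m)/φ_p)·Σ_{x=0}^{p−1} ∏_{j=0, j≠x}^{p−1} Λ_x(j) + 1/(λ_p·m). (This is the closed-form expression for the mean time to data loss MTTDL_p of an EPG with m data and p parity disks.) -/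
open Finset

/-- Closed-form expression for the mean time to data loss `MTTDL_p` of an EPG with
`m` data and `p` parity disks (Theorem 3.1): the last component of the solution vector
equals `1/(λ_p m)`, and hence the sum of all components (which is `MTTDL_p`) has the
stated closed form. -/
theorem mttdl_closed_form
    (p m : ℕ) (hp : 1 ≤ p) (hm : 1 ≤ m)
    (lam : ℕ → ℝ) (mu : ℕ → ℝ)
    (hlam : ∀ i ≤ p, 0 < lam i) (hmu : ∀ i ≤ p - 1, 0 ≤ mu i)
    (n : ℕ) (hn : n = m + p)
    (Lam : ℕ → ℕ → ℝ)
    (hLam : ∀ x j, Lam x j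
      = lam j * ((n : ℝ) - j) + (if x ≤ j then (j : ℝ) * mu (j - 1) else 0))
    (phi : ℝ) (hphi : phi = ∏ i ∈ Finset.range (p + 1), lam i * ((m : ℝ) + i))
    (v : ℕ → ℝ)
    (hv : ∀ x ≤ p, v x =
      if x = p then (∏ i ∈ Finset.range p, lam i * ((m : ℝ) + 1 + i)) / phi
      else (((p : ℝ) * mu (p - 1) + lam p * m) / phi) *
        ∏ j ∈ (Finset.range p).erase x, Lam x j) :
    v p = 1 / (lam p * m) ∧
      ∑ x ∈ Finset.range (p + 1), v x =
        (((p : ℝ) * mu (p - 1) + lam p * m) / phi) *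
          (∑ x ∈ Finset.range p, ∏ j ∈ (Finset.range p).erase x, Lam x j) +
          1 / (lam p * m) := by
  set N : ℝ := ∏ i ∈ Finset.range p, lam i * ((m : ℝ) + 1 + i) with hN
  have hNpos : 0 < N := by
    apply Finset.prod_pos
    intro i hi
    have hi' : i ≤ p := le_of_lt (Finset.mem_range.mp hi)
    have : (0:ℝ) < (m : ℝ) + 1 + i := by positivity
    exact mul_pos (hlam i hi') this
  have key : phi = N * (lam p * m) := by
    rw [hphi, hN, Finset.prod_mul_distrib, Finset.prod_mul_distrib,
      Finset.prod_range_succ (fun i => lam i)]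
    have h2 : ∏ i ∈ Finset.range (p + 1), ((m : ℝ) + i)
        = (∏ i ∈ Finset.range p, ((m : ℝ) + 1 + i)) * (m : ℝ) := by
      rw [Finset.prod_range_succ' (fun i => ((m : ℝ) + i))]
      push_cast
      ring_nf
    rw [h2]
    ring
  have hvp : v p = 1 / (lam p * m) := by
    have hmpos : (0:ℝ) < lam p * m := by
      have : (0:ℝ) < (m : ℝ) := by positivity
      exact mul_pos (hlam p le_rfl) this
    rw [hv p le_rfl, if_pos rfl, key]
    field_simp
  refine ⟨hvp, ?_⟩
  rw [Finset.sum_range_succ, hvp, Finset.mul_sum]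
  congr 1
  apply Finset.sum_congr rfl
  intro x hx
  have hxp : x < p := Finset.mem_range.mp hx
  rw [hv x (le_of_lt hxp), if_neg (Nat.ne_of_lt hxp)]
end

section
/- With the sequences φ_t and φ*_t defined by the stated recursions, if ξ_1 = ξ_2 = 0, then φ_p − φ*_p = Σ_{i=3}^{p} γ_{i−1}·ξ_i·∏_{j=i}^{p} (j·μ_{j−1} + λ_j·(n − j)). (Theorem 3.3: exact error of the underestimator φ*_p of φ_p.) -/
open Finset

/-- Theorem 3.3: the exact error of the underestimator `φ*_p` of `φ_p`:
`φ_p − φ*_p = ∑_{i=3}^{p} γ_{i−1} ξ_i ∏_{j=i}^{p} (j μ_{j−1} + λ_j (n − j))`. -/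
theorem phi_underestimator_error
    (p : ℕ) (hp : 1 ≤ p) (n : ℝ)
    (lam mu gam xi : ℕ → ℝ)
    (phi phistar : ℕ → ℝ)
    (hphi0 : phi 0 = n * lam 0)
    (hphistar0 : phistar 0 = n * lam 0)
    (hphi : ∀ t, 1 ≤ t → t ≤ p → phi t =
      (∏ i ∈ Finset.range (t + 1), lam i * (n - i)) +
        ((t : ℝ) * mu (t - 1) + lam t * (n - t)) *
          (phi (t - 1) - (∏ i ∈ Finset.range t, lam i * (n - i)) +
            gam (t - 1) * ((∏ i ∈ Finset.range (t - 1), (gam i + lam i * (n - i))) + xi t)))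
    (hphistar : ∀ t, 1 ≤ t → t ≤ p → phistar t =
      (∏ i ∈ Finset.range (t + 1), lam i * (n - i)) +
        ((t : ℝ) * mu (t - 1) + lam t * (n - t)) *
          (phistar (t - 1) - (∏ i ∈ Finset.range t, lam i * (n - i)) +
            gam (t - 1) * (∏ i ∈ Finset.range (t - 1), (gam i + lam i * (n - i)))))
    (hxi1 : xi 1 = 0) (hxi2 : xi 2 = 0) :
    phi p - phistar p =
      ∑ i ∈ Finset.Icc 3 p, gam (i - 1) * xi i *
        ∏ j ∈ Finset.Icc i p, ((j : ℝ) * mu (j - 1) + lam j * (n - j)) := by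
  set c : ℕ → ℝ := fun j => (j : ℝ) * mu (j - 1) + lam j * (n - j) with hc
  suffices h : ∀ t, t ≤ p → phi t - phistar t =
      ∑ i ∈ Finset.Icc 3 t, gam (i - 1) * xi i * ∏ j ∈ Finset.Icc i t, c j from
    h p le_rfl
  intro t
  induction t with
  | zero => intro _; simp [hphi0, hphistar0]
  | succ t ih =>
    intro htp
    have ht : t ≤ p := le_trans (Nat.le_succ t) htp
    have key : phi (t + 1) - phistar (t + 1) =
        c (t + 1) * ((phi t - phistar t) + gam t * xi (t + 1)) := by
      rw [hphi (t + 1) (Nat.le_add_left 1 t) htp, hphistar (t + 1) (Nat.le_add_left 1 t) htp]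
      simp only [Nat.add_sub_cancel, hc]
      ring
    rw [key, ih ht]
    rcases Nat.lt_or_ge t 2 with h2 | h2
    · interval_cases t <;> simp_all
    · have h3 : 3 ≤ t + 1 := by omega
      rw [Finset.sum_Icc_succ_top h3, Nat.add_sub_cancel]
      have hprod : ∀ i ∈ Finset.Icc 3 t,
          gam (i - 1) * xi i * ∏ j ∈ Finset.Icc i (t + 1), c j =
          (gam (i - 1) * xi i * ∏ j ∈ Finset.Icc i t, c j) * c (t + 1) := by
        intro i hi
        rw [Finset.prod_Icc_succ_top (le_trans (Finset.mem_Icc.mp hi).2 (Nat.le_succ t))]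
        ring
      rw [Finset.sum_congr rfl hprod, ← Finset.sum_mul, Finset.Icc_self, Finset.prod_singleton]
      ring
end

section
/- With the sequences φ_t and φ*_t defined by the stated recursions, suppose in addition that n is a real with n ≥ p, and that all of λ_0,…,λ_p, μ_0,…,μ_{p−1}, γ_0,…,γ_{p−1} and ξ_1,…,ξ_p are nonnegative. Then φ*_p ≤ φ_p, i.e. φ*_p is an underestimator of φ_p. -/
open Finset

/-- Under nonnegativity of all rates and of the `ξ` terms (and `n ≥ p`),
`φ*_p` is an underestimator of `φ_p`, i.e. `φ*_p ≤ φ_p`. -/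
theorem phistar_le_phi
    (p : ℕ) (hp : 1 ≤ p) (n : ℝ) (hn : (p : ℝ) ≤ n)
    (lam mu gam xi : ℕ → ℝ)
    (hlam : ∀ i ≤ p, 0 ≤ lam i)
    (hmu : ∀ i ≤ p - 1, 0 ≤ mu i)
    (hgam : ∀ i ≤ p - 1, 0 ≤ gam i)
    (hxi : ∀ i, 1 ≤ i → i ≤ p → 0 ≤ xi i)
    (phi phistar : ℕ → ℝ)
    (hphi0 : phi 0 = n * lam 0)
    (hphistar0 : phistar 0 = n * lam 0)
    (hphi : ∀ t, 1 ≤ t → t ≤ p → phi t =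
      (∏ i ∈ Finset.range (t + 1), lam i * (n - i)) +
        ((t : ℝ) * mu (t - 1) + lam t * (n - t)) *
          (phi (t - 1) - (∏ i ∈ Finset.range t, lam i * (n - i)) +
            gam (t - 1) * ((∏ i ∈ Finset.range (t - 1), (gam i + lam i * (n - i))) + xi t)))
    (hphistar : ∀ t, 1 ≤ t → t ≤ p → phistar t =
      (∏ i ∈ Finset.range (t + 1), lam i * (n - i)) +
        ((t : ℝ) * mu (t - 1) + lam t * (n - t)) *
          (phistar (t - 1) - (∏ i ∈ Finset.range t, lam i * (n - i)) +
            gam (t - 1) * (∏ i ∈ Finset.range (t - 1), (gam i + lam i * (n - i))))) :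
    phistar p ≤ phi p := by
  suffices h : ∀ t, t ≤ p → phistar t ≤ phi t from h p le_rfl
  intro t
  induction t with
  | zero => intro _; rw [hphi0, hphistar0]
  | succ t ih =>
    intro hle
    have h1 : 1 ≤ t + 1 := Nat.succ_le_succ (Nat.zero_le t)
    rw [hphi (t + 1) h1 hle, hphistar (t + 1) h1 hle]
    simp only [Nat.add_sub_cancel]
    have hih := ih (le_trans (Nat.le_succ t) hle)
    have htp : t ≤ p - 1 := Nat.le_sub_one_of_lt hle
    have hnt : ((t + 1 : ℕ) : ℝ) ≤ n := le_trans (by exact_mod_cast Nat.cast_le.mpr hle) hn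
    have hc : (0 : ℝ) ≤ ((t + 1 : ℕ) : ℝ) * mu t + lam (t + 1) * (n - ((t + 1 : ℕ) : ℝ)) := by
      have h2 := hmu t htp
      have h3 := hlam (t + 1) hle
      have h4 : (0:ℝ) ≤ ((t + 1 : ℕ) : ℝ) := Nat.cast_nonneg _
      nlinarith
    have hg : 0 ≤ gam t := hgam t htp
    have hx : 0 ≤ xi (t + 1) := hxi (t + 1) h1 hle
    have key : phistar t - (∏ i ∈ Finset.range (t + 1), lam i * (n - i)) +
        gam t * (∏ i ∈ Finset.range t, (gam i + lam i * (n - i))) ≤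
        phi t - (∏ i ∈ Finset.range (t + 1), lam i * (n - i)) +
        gam t * ((∏ i ∈ Finset.range t, (gam i + lam i * (n - i))) + xi (t + 1)) := by
      nlinarith [mul_nonneg hg hx]
    have := mul_le_mul_of_nonneg_left key hc
    push_cast at this ⊢
    linarith
end

section
/- With the sequences φ_t and φ*_t defined by the stated recursions, suppose p ≥ 3, ξ_1 = ξ_2 = 0, n = m + p for an integer m ≥ 1, γ_0 = γ_1 = ⋯ = γ_{p−2} = 0, and γ_{p−1} = (m+1)·λ_{p−1}·(1 − (1 − η)^m) for a real η (the per-device uncorrectable read error probability). Then φ_p − φ*_p = (m+1)·λ_{p−1}·(1 − (1 − η)^m)·ξ_p·(p·μ_{p−1} + m·λ_p). (The hard-error special case of Theorem 3.3: the error of the efficient MTTDL calculation is controlled by the uncorrectable error rate of the device.) -/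
open Finset

/-- The hard-error special case of Theorem 3.3: with `γ_0 = ⋯ = γ_{p−2} = 0` and
`γ_{p−1} = (m+1) λ_{p−1} (1 − (1 − η)^m)`, the error of the efficient MTTDL
calculation is `φ_p − φ*_p = (m+1) λ_{p−1} (1 − (1 − η)^m) ξ_p (p μ_{p−1} + m λ_p)`. -/
theorem phi_error_hard_errors
    (p m : ℕ) (hp : 3 ≤ p) (hm : 1 ≤ m) (n : ℝ) (hn : n = (m : ℝ) + p)
    (eta : ℝ)
    (lam mu gam xi : ℕ → ℝ)
    (phi phistar : ℕ → ℝ)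
    (hphi0 : phi 0 = n * lam 0)
    (hphistar0 : phistar 0 = n * lam 0)
    (hphi : ∀ t, 1 ≤ t → t ≤ p → phi t =
      (∏ i ∈ Finset.range (t + 1), lam i * (n - i)) +
        ((t : ℝ) * mu (t - 1) + lam t * (n - t)) *
          (phi (t - 1) - (∏ i ∈ Finset.range t, lam i * (n - i)) +
            gam (t - 1) * ((∏ i ∈ Finset.range (t - 1), (gam i + lam i * (n - i))) + xi t)))
    (hphistar : ∀ t, 1 ≤ t → t ≤ p → phistar t =
      (∏ i ∈ Finset.range (t + 1), lam i * (n - i)) +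
        ((t : ℝ) * mu (t - 1) + lam t * (n - t)) *
          (phistar (t - 1) - (∏ i ∈ Finset.range t, lam i * (n - i)) +
            gam (t - 1) * (∏ i ∈ Finset.range (t - 1), (gam i + lam i * (n - i)))))
    (hxi1 : xi 1 = 0) (hxi2 : xi 2 = 0)
    (hgam : ∀ j ≤ p - 2, gam j = 0)
    (hgamtop : gam (p - 1) = ((m : ℝ) + 1) * lam (p - 1) * (1 - (1 - eta) ^ m)) :
    phi p - phistar p =
      ((m : ℝ) + 1) * lam (p - 1) * (1 - (1 - eta) ^ m) * xi p *
        ((p : ℝ) * mu (p - 1) + (m : ℝ) * lam p) := by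
  have key : ∀ t ≤ p - 1, phi t = phistar t := by
    intro t ht
    induction t with
    | zero => rw [hphi0, hphistar0]
    | succ k ih =>
      have hk : k ≤ p - 1 := Nat.le_of_succ_le ht
      have hg : gam k = 0 := hgam k (by omega)
      rw [hphi (k + 1) (by omega) (by omega), hphistar (k + 1) (by omega) (by omega)]
      simp only [Nat.add_sub_cancel, hg, ih hk]
      ring
  have hpp : phi p = _ := hphi p (by omega) le_rfl
  have hps : phistar p = _ := hphistar p (by omega) le_rfl
  have heq : phi (p - 1) = phistar (p - 1) := key (p - 1) le_rfl
  have hnp : n - p = (m : ℝ) := by rw [hn]; ring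
  rw [hpp, hps, heq, hgamtop, hnp]
  ring
end

section
/- Fix an integer n and positive reals λ_0, λ_1, λ_2, … and nonnegative reals μ_0, μ_1, μ_2, …. For an integer q with 1 ≤ q ≤ n − 2, write m_q = n − q for the number of data disks when q parity disks are used, and define the closed-form mean time to data loss MTTDL_q = ((q·μ_{q−1} + λ_q·m_q)/∏_{i=0}^{q} λ_i·(m_q + i))·Σ_{x=0}^{q−1} ∏_{j=0, j≠x}^{q−1} Λ_x(j) + 1/(λ_q·m_q), where Λ_x(j) = λ_j·(n − j) + (if j ≥ x then j·μ_{j−1} else 0) and j·μ_{j−1} is interpreted as 0 when j = 0. Then for every p with 1 ≤ p ≤ n − 3 and m = n − p ≥ 2, the recursion MTTDL_{p+1} = MTTDL_p + ((p+1)·μ_p/(λ_{p+1}·(m − 1)))·MTTDL_p + 1/(λ_{p+1}·(m − 1)) holds. (Theorem on the recursive relation for MTTDL_p for a disk array of fixed total size n.) -/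
/-!
Write `A_q = q μ_{q-1} + λ_q m_q`, `S_q` for the sum over `x`, and `Q_q = ∏_{j<q} λ_j (n - j)`.
Since `m_q + i` runs over `n - q, …, n`, the denominator of `MTTDL_q` is `Q_{q+1}`, so it does
not depend on how the `n` disks are split into data and parity disks. Splitting off the factor
`j = p` in every product gives `S_{p+1} = A_p S_p + Q_p`. Then `Q_{p+2} = λ_{p+1} (m - 1) Q_{p+1}`
and `Q_{p+1} = λ_p m Q_p` turn `MTTDL_{p+1}` into `A_{p+1} / (λ_{p+1} (m - 1)) · MTTDL_p +
1 / (λ_{p+1} (m - 1))`, and `A_{p+1} = λ_{p+1} (m - 1) + (p + 1) μ_p`.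
-/

open Finset

/-- The closed-form mean time to data loss of a disk array with `n` disks in total,
`q` of which are parity disks (so `m_q = n - q` data disks):
`MTTDL_q = ((q μ_{q−1} + λ_q m_q)/∏_{i=0}^{q} λ_i (m_q + i)) ∑_{x=0}^{q−1} ∏_{j≠x} Λ_x(j)
  + 1/(λ_q m_q)`. -/
noncomputable def MTTDLcf (n : ℕ) (lam mu : ℕ → ℝ) (q : ℕ) : ℝ :=
  (((q : ℝ) * mu (q - 1) + lam q * ((n - q : ℕ) : ℝ)) /
      ∏ i ∈ Finset.range (q + 1), lam i * (((n - q : ℕ) : ℝ) + i)) *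
    ∑ x ∈ Finset.range q, ∏ j ∈ (Finset.range q).erase x,
      (lam j * ((n : ℝ) - j) + if x ≤ j then (j : ℝ) * mu (j - 1) else 0) +
  1 / (lam q * ((n - q : ℕ) : ℝ))

theorem prod_range_succ_sub_add_eq_prod_sub {R : Type*} [CommRing R] (x : R) (q : ℕ) :
    ∏ i ∈ range (q + 1), (x - q + i) = ∏ i ∈ range (q + 1), (x - i) := by
  rw [← prod_range_reflect]
  refine prod_congr rfl fun i hi => ?_
  rw [add_tsub_cancel_right, Nat.cast_sub (Nat.le_of_lt_succ (mem_range.mp hi))]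
  ring

theorem sum_prod_erase_add_ite_succ {R : Type*} [CommSemiring R] (a b : ℕ → R) (q : ℕ) :
    ∑ x ∈ range (q + 1), ∏ j ∈ (range (q + 1)).erase x, (a j + if x ≤ j then b j else 0) =
      (a q + b q) *
          ∑ x ∈ range q, ∏ j ∈ (range q).erase x, (a j + if x ≤ j then b j else 0) +
        ∏ j ∈ range q, a j := by
  rw [sum_range_succ, range_add_one, erase_insert notMem_range_self, mul_sum]
  congr 1
  · refine sum_congr rfl fun x hx => ?_
    rw [erase_insert_of_ne (mem_range.mp hx).ne', prod_insert (by simp),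
      if_pos (mem_range.mp hx).le]
  · exact prod_congr rfl fun j hj => by rw [if_neg (by simpa using hj), add_zero]

theorem MTTDLcf_eq_of_le {n q : ℕ} (lam mu : ℕ → ℝ) (hq : q ≤ n) :
    MTTDLcf n lam mu q =
      ((q : ℝ) * mu (q - 1) + lam q * ((n : ℝ) - q)) /
          (∏ i ∈ range (q + 1), lam i * ((n : ℝ) - i)) *
        ∑ x ∈ range q, ∏ j ∈ (range q).erase x,
          (lam j * ((n : ℝ) - j) + if x ≤ j then (j : ℝ) * mu (j - 1) else 0) +
      1 / (lam q * ((n : ℝ) - q)) := by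
  rw [MTTDLcf, Nat.cast_sub hq, prod_mul_distrib, prod_mul_distrib,
    prod_range_succ_sub_add_eq_prod_sub]

theorem mttdl_recursion_general
    (n : ℕ) (lam mu : ℕ → ℝ)
    (hlam : ∀ i, 0 < lam i)
    (p : ℕ)
    (m : ℕ) (hm : m = n - p) (hm2 : 2 ≤ m) :
    MTTDLcf n lam mu (p + 1) =
      MTTDLcf n lam mu p +
        (((p : ℝ) + 1) * mu p / (lam (p + 1) * ((m : ℝ) - 1))) * MTTDLcf n lam mu p +
        1 / (lam (p + 1) * ((m : ℝ) - 1)) := by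
  have hm₀ : (n : ℝ) - p = m := by rw [hm, Nat.cast_sub (by omega)]
  have hm₁ : (n : ℝ) - (p + 1 : ℕ) = m - 1 := by push_cast; linarith
  have hQ : ∏ j ∈ range p, lam j * ((n : ℝ) - j) ≠ 0 :=
    prod_ne_zero_iff.mpr fun j hj => mul_ne_zero (hlam j).ne' <|
      sub_ne_zero.mpr (by exact_mod_cast ((mem_range.mp hj).trans_le (by omega)).ne')
  have hm₀' : (m : ℝ) ≠ 0 := by exact_mod_cast (by omega : m ≠ 0)
  have hm₁' : (m : ℝ) - 1 ≠ 0 := sub_ne_zero.mpr (by exact_mod_cast (by omega : m ≠ 1))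
  rw [MTTDLcf_eq_of_le lam mu (by omega), MTTDLcf_eq_of_le lam mu (by omega),
    sum_prod_erase_add_ite_succ (fun j => lam j * ((n : ℝ) - j))
      (fun j => (j : ℝ) * mu (j - 1)),
    prod_range_succ _ (p + 1), prod_range_succ _ p, hm₀, hm₁]
  have hlam₀ := (hlam p).ne'
  have hlam₁ := (hlam (p + 1)).ne'
  field_simp
  push_cast
  ring

/-- Theorem on the recursive relation for `MTTDL_p` for a disk array of fixed total size `n`
(Theorem 3.4 / Appendix B):
`MTTDL_{p+1} = MTTDL_p + ((p+1) μ_p / (λ_{p+1}(m−1))) MTTDL_p + 1/(λ_{p+1}(m−1))`,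
where `m = n − p`. -/
theorem mttdl_recursion
    (n : ℕ) (lam mu : ℕ → ℝ)
    (hlam : ∀ i, 0 < lam i) (hmu : ∀ i, 0 ≤ mu i)
    (p : ℕ) (hp : 1 ≤ p) (hpn : p ≤ n - 3)
    (m : ℕ) (hm : m = n - p) (hm2 : 2 ≤ m) :
    MTTDLcf n lam mu (p + 1) =
      MTTDLcf n lam mu p +
        (((p : ℝ) + 1) * mu p / (lam (p + 1) * ((m : ℝ) - 1))) * MTTDLcf n lam mu p +
        1 / (lam (p + 1) * ((m : ℝ) - 1)) :=
  mttdl_recursion_general n lam mu hlam p m hm hm2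
end

section
/- Let p ≥ 1 and n be integers with m = n − p ≥ 1, let λ_0, …, λ_p be reals and μ_0, …, μ_{p−1} be reals, and define Λ_x(j) = λ_j·(n − j) + (if j ≥ x then j·μ_{j−1} else 0) with j·μ_{j−1} interpreted as 0 when j = 0. Then Σ_{x=0}^{p} ∏_{j=0, j≠x}^{p} Λ_x(j) = (λ_p·m + p·μ_{p−1})·Σ_{x=0}^{p−1} ∏_{j=0, j≠x}^{p−1} Λ_x(j) + ∏_{j=0}^{p−1} λ_j·(m + 1 + j). (The key algebraic identity of Appendix B used in the proof of the MTTDL recursion.) -/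
open Finset

/-- The key algebraic identity of Appendix B used in the proof of the MTTDL recursion:
`∑_{x=0}^{p} ∏_{j=0, j≠x}^{p} Λ_x(j)
  = (λ_p m + p μ_{p−1}) ∑_{x=0}^{p−1} ∏_{j=0, j≠x}^{p−1} Λ_x(j)
    + ∏_{j=0}^{p−1} λ_j (m + 1 + j)`. -/
theorem lambda_sum_prod_identity
    (p n : ℕ) (hp : 1 ≤ p) (m : ℕ) (hm : m = n - p) (hm1 : 1 ≤ m) (hpn : p ≤ n)
    (lam mu : ℕ → ℝ)
    (Lam : ℕ → ℕ → ℝ)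
    (hLam : ∀ x j, Lam x j
      = lam j * ((n : ℝ) - j) + (if x ≤ j then (j : ℝ) * mu (j - 1) else 0)) :
    ∑ x ∈ Finset.range (p + 1), ∏ j ∈ (Finset.range (p + 1)).erase x, Lam x j =
      (lam p * (m : ℝ) + (p : ℝ) * mu (p - 1)) *
        ∑ x ∈ Finset.range p, ∏ j ∈ (Finset.range p).erase x, Lam x j +
      ∏ j ∈ Finset.range p, lam j * ((m : ℝ) + 1 + j) := by
  have hc : (m : ℝ) = (n : ℝ) - p := by
    subst hm; rw [Nat.cast_sub hpn]
  rw [Finset.sum_range_succ]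
  have h1 : ∀ x ∈ Finset.range p,
      ∏ j ∈ (Finset.range (p+1)).erase x, Lam x j
        = (lam p * (m:ℝ) + (p:ℝ) * mu (p-1)) * ∏ j ∈ (Finset.range p).erase x, Lam x j := by
    intro x hx
    simp only [Finset.mem_range] at hx
    rw [Finset.range_add_one, Finset.erase_insert_of_ne (by omega : p ≠ x),
      Finset.prod_insert (by simp), hLam, if_pos (by omega : x ≤ p), hc]
  rw [Finset.sum_congr rfl h1, ← Finset.mul_sum]
  have h2 : (Finset.range (p+1)).erase p = Finset.range p := by
    rw [Finset.range_add_one, Finset.erase_insert (by simp)]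
  rw [h2]
  congr 1
  have h3 : ∏ j ∈ Finset.range p, Lam p j = ∏ j ∈ Finset.range p, lam j * ((n:ℝ) - j) := by
    refine Finset.prod_congr rfl fun j hj => ?_
    simp only [Finset.mem_range] at hj
    rw [hLam, if_neg (by omega), add_zero]
  rw [h3, Finset.prod_mul_distrib, Finset.prod_mul_distrib]
  congr 1
  rw [← Finset.prod_range_reflect (fun j => (n:ℝ) - j) p]
  refine Finset.prod_congr rfl fun j hj => ?_
  simp only [Finset.mem_range] at hj
  have he : ((p - 1 - j : ℕ) : ℝ) = (p:ℝ) - 1 - j := by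
    have h : p - 1 - j = p - (1 + j) := by omega
    rw [h, Nat.cast_sub (by omega : 1 + j ≤ p)]
    push_cast; ring
  rw [he, hc]
  ring
end

section
/- Let n ≥ 1 and m be integers with 1 ≤ m ≤ n, let j be an integer with 0 ≤ j ≤ n, and let S̄ be a real number. Then Σ_{i=0}^{j} ((i·S̄ + m − i)·C(m,i)·C(n−m, j−i))/(m·C(n,j)) = 1 + (S̄ − 1)·j/n, where C(a,b) denotes the binomial coefficient (equal to 0 when b > a). (This evaluates the average read overhead Φ_j(n) of Theorem 3.5 for a systematic (n,m) block code with average number of block accesses S̄, and in particular yields the asymptotic form Φ_j(n) → 1 + (S̄−1)·j/n.) -/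
/-!
With `N i = C(m,i) C(n-m,j-i)` the numerator is `((S̄ - 1) i + m) N i`. Vandermonde's identity gives
`∑ N i = C(n,j)`, and the mean of the hypergeometric distribution gives `∑ i N i = (m j / n) C(n,j)`.
-/

open Finset

namespace Nat

theorem sum_range_choose_mul_choose (a b j : ℕ) :
    ∑ i ∈ range (j + 1), a.choose i * b.choose (j - i) = (a + b).choose j := by
  rw [add_choose_eq, Finset.Nat.sum_antidiagonal_eq_sum_range_succ_mk]

theorem add_mul_sum_range_mul_choose_mul_choose (a b j : ℕ) :
    (a + b) * ∑ i ∈ range (j + 1), i * a.choose i * b.choose (j - i) =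
      a * j * (a + b).choose j := by
  rcases j with _ | k
  · simp
  rw [sum_range_succ', zero_mul, zero_mul, add_zero]
  rcases a with _ | a
  · simp
  have term (i : ℕ) : (i + 1) * (a + 1).choose (i + 1) * b.choose (k + 1 - (i + 1)) =
      (a + 1) * (a.choose i * b.choose (k - i)) := by
    rw [Nat.add_sub_add_right, mul_comm (i + 1), ← add_one_mul_choose_eq, mul_assoc]
  have pascal : (a + b + 1) * (a + b).choose k = (a + b + 1).choose (k + 1) * (k + 1) :=
    add_one_mul_choose_eq (a + b) k
  simp only [term, ← mul_sum, sum_range_choose_mul_choose, Nat.add_right_comm a 1 b]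
  rw [mul_left_comm, pascal]
  ring

end Nat

/-- The average read overhead `Φ_j(n)` of a systematic `(n,m)` block code with average
number of block accesses `S̄` (Theorem 3.5) evaluates exactly to `1 + (S̄−1)·j/n`:
`∑_{i=0}^{j} (i S̄ + m − i) C(m,i) C(n−m,j−i) / (m C(n,j)) = 1 + (S̄−1) j / n`. -/
theorem average_read_overhead
    (n m j : ℕ) (hm : 1 ≤ m) (hmn : m ≤ n) (hj : j ≤ n)
    (Sbar : ℝ) :
    ∑ i ∈ Finset.range (j + 1),
        ((i : ℝ) * Sbar + (m : ℝ) - i) * (m.choose i : ℝ) * ((n - m).choose (j - i) : ℝ) /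
          ((m : ℝ) * (n.choose j : ℝ)) =
      1 + (Sbar - 1) * (j : ℝ) / (n : ℝ) := by
  obtain ⟨b, rfl⟩ := Nat.exists_eq_add_of_le hmn
  rw [Nat.add_sub_cancel_left, ← sum_div]
  have total : (∑ i ∈ range (j + 1), (m.choose i : ℝ) * b.choose (j - i)) = (m + b).choose j := by
    exact_mod_cast Nat.sum_range_choose_mul_choose m b j
  have mean : ((m : ℝ) + b) * ∑ i ∈ range (j + 1), (i : ℝ) * m.choose i * b.choose (j - i) =
      m * j * (m + b).choose j := by
    exact_mod_cast Nat.add_mul_sum_range_mul_choose_mul_choose m b j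
  have regroup : ∑ i ∈ range (j + 1), ((i : ℝ) * Sbar + m - i) * m.choose i * b.choose (j - i) =
      (Sbar - 1) * (∑ i ∈ range (j + 1), (i : ℝ) * m.choose i * b.choose (j - i)) +
        m * ∑ i ∈ range (j + 1), (m.choose i : ℝ) * b.choose (j - i) := by
    rw [mul_sum, mul_sum, ← sum_add_distrib]
    exact sum_congr rfl fun i _ ↦ by ring
  have hm0 : (m : ℝ) ≠ 0 := by positivity
  have hC0 : ((m + b).choose j : ℝ) ≠ 0 := by exact_mod_cast (Nat.choose_pos hj).ne'
  rw [regroup, total]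
  push_cast
  field_simp
  linear_combination (Sbar - 1) * mean
end
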